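/- arXiv:2103.02936 — 4 statements merged into one kernel-verified Lean document; each statement's English description precedes it below -/
import Mathlib

section
/- For a class 𝒢 of simple graphs on a fixed vertex type, the class of complements of graphs that can be subgraph-complemented into 𝒢 equals the class of graphs that can be subgraph-complemented into the class of complements of graphs of 𝒢. Formally, with 𝒢⁽¹⁾ = {G : ∃ S, G ⊕ S ∈ 𝒢}, we have complement(𝒢⁽¹⁾) = (complement 𝒢)⁽¹⁾. -/
/-- Subgraph complement `G ⊕ S`: flip adjacency of pairs with both endpoints in `S`. -/
def SimpleGraph.scompl {V : Type*} (G : SimpleGraph V) (S : Set V) : SimpleGraph V where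
  Adj u v := u ≠ v ∧ ((G.Adj u v ∧ ¬(u ∈ S ∧ v ∈ S)) ∨ (¬G.Adj u v ∧ u ∈ S ∧ v ∈ S))
  symm := by
    constructor
    rintro u v ⟨hne, h⟩
    refine ⟨hne.symm, ?_⟩
    rcases h with ⟨h1, h2⟩ | ⟨h1, h2, h3⟩
    · exact Or.inl ⟨h1.symm, fun hb => h2 ⟨hb.2, hb.1⟩⟩
    · exact Or.inr ⟨fun h => h1 h.symm, h3, h2⟩
  loopless := ⟨fun v h => h.1 rfl⟩

theorem SimpleGraph.compl_scompl {V : Type*} (G : SimpleGraph V) (S : Set V) :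
    (G.scompl S)ᶜ = Gᶜ.scompl S := by
  ext u v
  simp only [compl_adj, scompl]
  tauto

theorem compl_image_sc_one {V : Type*} (𝒢 : Set (SimpleGraph V)) :
    (fun G => Gᶜ) '' {G : SimpleGraph V | ∃ S : Set V, G.scompl S ∈ 𝒢} =
      {G : SimpleGraph V | ∃ S : Set V, G.scompl S ∈ (fun G => Gᶜ) '' 𝒢} := by
  ext H
  simp only [Set.mem_compl_image, Set.mem_ofPred, SimpleGraph.compl_scompl]
end

section
/- Let t ≥ 2, let G be a graph, S ⊆ V(G) with |S| ≥ 2 such that G ⊕ S is K_t-free, and let u, v ∈ S. Then the graph induced by N(u) ∩ N(v) in G is a (t−1, t−1)-split graph; moreover, the pair (T, S') with T = (N(u) ∩ N(v)) \ S and S' = N(u) ∩ N(v) ∩ S is a (t−1,t−1)-split partition: G[T] is K_t-free and G[S'] is tK₁-free. -/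
/-!
Complementing inside `S` changes no pair with an endpoint outside `S`, and turns non-edges of `G`
inside `S` into edges; so a `t`-clique of `G` avoiding `S`, or a `t`-independent set of `G`
inside `S`, would be a `t`-clique of `G ⊕ S`.
-/

namespace SimpleGraph

variable {V : Type*} (G : SimpleGraph V) {S : Set V}

theorem scompl_adj_of_notMem_left {x y : V} (hx : x ∉ S) :
    (G.scompl S).Adj x y ↔ G.Adj x y := by
  simp only [scompl, hx, false_and, and_false, not_false_eq_true, and_true, or_false,
    and_iff_right_iff_imp]
  exact Adj.ne

theorem scompl_adj_of_mem {x y : V} (hx : x ∈ S) (hy : y ∈ S) :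
    (G.scompl S).Adj x y ↔ Gᶜ.Adj x y := by
  simp [scompl, hx, hy, compl_adj]

theorem isClique_scompl_iff_of_disjoint {s : Set V} (hs : Disjoint s S) :
    (G.scompl S).IsClique s ↔ G.IsClique s := by
  simp only [isClique_iff, Set.Pairwise]
  exact forall₂_congr fun x hx => forall₃_congr fun _ _ _ =>
    G.scompl_adj_of_notMem_left (hs.notMem_of_mem_left hx)

theorem isClique_scompl_iff_of_subset {s : Set V} (hs : s ⊆ S) :
    (G.scompl S).IsClique s ↔ Gᶜ.IsClique s := by
  simp only [isClique_iff, Set.Pairwise]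
  exact forall₂_congr fun x hx => forall₂_congr fun y hy => forall_congr' fun _ =>
    G.scompl_adj_of_mem (hs hx) (hs hy)

theorem isNClique_scompl_iff_of_disjoint {n : ℕ} {s : Finset V} (hs : Disjoint (s : Set V) S) :
    (G.scompl S).IsNClique n s ↔ G.IsNClique n s := by
  rw [isNClique_iff, isNClique_iff, G.isClique_scompl_iff_of_disjoint hs]

theorem isNClique_scompl_iff_of_subset {n : ℕ} {s : Finset V} (hs : (s : Set V) ⊆ S) :
    (G.scompl S).IsNClique n s ↔ Gᶜ.IsNClique n s := by
  rw [isNClique_iff, isNClique_iff, G.isClique_scompl_iff_of_subset hs]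

end SimpleGraph

theorem common_nbhd_split_general {V : Type*} (G : SimpleGraph V) (t : ℕ)
    (S : Set V)
    (hfree : ¬ ∃ s : Finset V, (G.scompl S).IsNClique t s)
    (u v : V) :
    ((G.neighborSet u ∩ G.neighborSet v) \ S) ∪ (G.neighborSet u ∩ G.neighborSet v ∩ S)
        = G.neighborSet u ∩ G.neighborSet v ∧
      Disjoint ((G.neighborSet u ∩ G.neighborSet v) \ S)
        (G.neighborSet u ∩ G.neighborSet v ∩ S) ∧
      (¬ ∃ s : Finset V, ↑s ⊆ (G.neighborSet u ∩ G.neighborSet v) \ S ∧ G.IsNClique t s) ∧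
      (¬ ∃ s : Finset V, ↑s ⊆ G.neighborSet u ∩ G.neighborSet v ∩ S ∧ Gᶜ.IsNClique t s) := by
  refine ⟨Set.sdiff_union_inter _ _, Set.disjoint_sdiff_inter, ?_, ?_⟩
  · rintro ⟨s, hsub, hs⟩
    have hdisj : Disjoint (s : Set V) S := Set.disjoint_sdiff_left.mono_left hsub
    exact hfree ⟨s, (G.isNClique_scompl_iff_of_disjoint hdisj).2 hs⟩
  · rintro ⟨s, hsub, hs⟩
    have hsubS : (s : Set V) ⊆ S := hsub.trans Set.inter_subset_right
    exact hfree ⟨s, (G.isNClique_scompl_iff_of_subset hsubS).2 hs⟩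

theorem common_nbhd_split {V : Type*} (G : SimpleGraph V) (t : ℕ) (ht : 2 ≤ t)
    (S : Set V) (hS : 2 ≤ S.ncard)
    (hfree : ¬ ∃ s : Finset V, (G.scompl S).IsNClique t s)
    (u v : V) (hu : u ∈ S) (hv : v ∈ S) :
    ((G.neighborSet u ∩ G.neighborSet v) \ S) ∪ (G.neighborSet u ∩ G.neighborSet v ∩ S)
        = G.neighborSet u ∩ G.neighborSet v ∧
      Disjoint ((G.neighborSet u ∩ G.neighborSet v) \ S)
        (G.neighborSet u ∩ G.neighborSet v ∩ S) ∧
      (¬ ∃ s : Finset V, ↑s ⊆ (G.neighborSet u ∩ G.neighborSet v) \ S ∧ G.IsNClique t s) ∧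
      (¬ ∃ s : Finset V, ↑s ⊆ G.neighborSet u ∩ G.neighborSet v ∩ S ∧ Gᶜ.IsNClique t s) :=
  common_nbhd_split_general G t S hfree u v
end

section
/- Let A be a module of a graph G that induces a subgraph isomorphic to the complement of P₇ (so |A| = 7), and suppose W ⊆ V(G) induces a path P₇ in G. Then |W ∩ A| ≤ 1. -/
/-- A set `A` of vertices of `G` is a module if every vertex outside `A` is adjacent
either to all of `A` or to none of `A`. -/
def SimpleGraph.IsModule {V : Type*} (G : SimpleGraph V) (A : Set V) : Prop :=
  ∀ x ∉ A, (∀ a ∈ A, G.Adj x a) ∨ (∀ a ∈ A, ¬ G.Adj x a)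

open SimpleGraph in
instance instDecP7 : DecidableRel (pathGraph 7).Adj :=
  fun _ _ => decidable_of_iff _ (pathGraph_adj).symm

open SimpleGraph in
set_option maxRecDepth 10000 in
lemma pathGraph7_module (S : Finset (Fin 7))
    (h : ∀ j ∉ S, (∀ i ∈ S, (pathGraph 7).Adj j i) ∨ (∀ i ∈ S, ¬(pathGraph 7).Adj j i)) :
    S.card ≤ 1 ∨ S = Finset.univ := by
  revert h; revert S; decide

open SimpleGraph in
lemma pathGraph7_not_self_compl (e : pathGraph 7 ≃g (pathGraph 7)ᶜ) : False := by
  have h := e.card_edgeFinset_eq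
  have h1 : (pathGraph 7).edgeFinset.card = 6 := by decide
  have h2 : ((pathGraph 7)ᶜ).edgeFinset.card = 15 := by decide
  omega

theorem module_complP7_meets_P7_once {V : Type*} (G : SimpleGraph V) (A : Set V)
    (hA : G.IsModule A)
    (hiso : Nonempty (G.induce A ≃g (SimpleGraph.pathGraph 7)ᶜ))
    (W : Set V) (hW : Nonempty (G.induce W ≃g SimpleGraph.pathGraph 7)) :
    (W ∩ A).ncard ≤ 1 := by
  classical
  obtain ⟨g⟩ := hiso
  obtain ⟨f⟩ := hW
  set S : Finset (Fin 7) := Finset.univ.filter (fun i => ((f.symm i : W) : V) ∈ A) with hS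
  have hmemS : ∀ i : Fin 7, i ∈ S ↔ ((f.symm i : W) : V) ∈ A := by
    intro i; simp [hS]
  have himg : W ∩ A = (fun i => ((f.symm i : W) : V)) '' (↑S : Set (Fin 7)) := by
    ext x
    constructor
    · rintro ⟨hxW, hxA⟩
      refine ⟨f ⟨x, hxW⟩, ?_, ?_⟩
      · rw [Finset.mem_coe, hmemS]
        simp [hxA]
      · simp
    · rintro ⟨i, hi, rfl⟩
      exact ⟨(f.symm i).2, (hmemS i).1 (Finset.mem_coe.mp hi)⟩
  have hinj : Function.Injective (fun i : Fin 7 => ((f.symm i : W) : V)) := by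
    intro a b hab
    exact f.symm.toEquiv.injective (Subtype.val_injective hab)
  have hcard : (W ∩ A).ncard = S.card := by
    rw [himg, Set.ncard_image_of_injective _ hinj, Set.ncard_coe_finset]
  have key : ∀ i k : Fin 7, (SimpleGraph.pathGraph 7).Adj i k ↔
      G.Adj ((f.symm i : W) : V) ((f.symm k : W) : V) :=
    fun i k => (f.symm.map_adj_iff).symm
  have hmod : ∀ j ∉ S, (∀ i ∈ S, (SimpleGraph.pathGraph 7).Adj j i) ∨
      (∀ i ∈ S, ¬(SimpleGraph.pathGraph 7).Adj j i) := by
    intro j hj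
    have hx : ((f.symm j : W) : V) ∉ A := fun h => hj ((hmemS j).2 h)
    rcases hA _ hx with h | h
    · left
      intro i hi
      exact (key j i).2 (h _ ((hmemS i).1 hi))
    · right
      intro i hi
      exact fun hadj => h _ ((hmemS i).1 hi) ((key j i).1 hadj)
  rcases pathGraph7_module S hmod with h | h
  · omega
  · -- S = univ, so W ⊆ A, so W = A, contradiction
    exfalso
    have hWA : W ⊆ A := by
      intro x hx
      have : f ⟨x, hx⟩ ∈ S := h ▸ Finset.mem_univ _
      have := (hmemS _).1 this
      simpa using this
    have hAfin : A.Finite := Set.Finite.ofFinset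
      (Finset.univ.image (fun i => ((g.symm i : A) : V))) (by
        intro x
        simp only [Finset.mem_image, Finset.mem_univ, true_and]
        constructor
        · rintro ⟨i, rfl⟩; exact (g.symm i).2
        · intro hx; exact ⟨g ⟨x, hx⟩, by simp⟩)
    have hAcard : A.ncard = 7 := by
      rw [← Nat.card_coe_set_eq, Nat.card_congr g.toEquiv, Nat.card_eq_fintype_card,
        Fintype.card_fin]
    have hWcard : W.ncard = 7 := by
      rw [← Nat.card_coe_set_eq, Nat.card_congr f.toEquiv, Nat.card_eq_fintype_card,
        Fintype.card_fin]
    have hWeqA : W = A := Set.eq_of_subset_of_ncard_le hWA (by omega) hAfin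
    subst hWeqA
    exact pathGraph7_not_self_compl (f.symm.trans g)
end

section
/- Let A be a module of a graph G with |A| = 8 such that G[A] is isomorphic to the complement of C₈, and suppose W ⊆ V(G) induces a cycle C₈ in G. Then |W ∩ A| ≤ 1. -/
set_option maxRecDepth 10000

lemma L1 : ∀ S : Finset (Fin 8), 2 ≤ S.card → S ≠ Finset.univ →
    ∃ i, i ∉ S ∧ ∃ j ∈ S, ∃ k ∈ S,
      (SimpleGraph.cycleGraph 8).Adj i j ∧ ¬(SimpleGraph.cycleGraph 8).Adj i k := by decide

lemma L2 : ∀ a b c : Fin 8, ¬((SimpleGraph.cycleGraph 8).Adj a b ∧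
    (SimpleGraph.cycleGraph 8).Adj b c ∧ (SimpleGraph.cycleGraph 8).Adj a c) := by decide

theorem module_complC8_meets_C8_once {V : Type*} (G : SimpleGraph V) (A : Set V)
    (hA : G.IsModule A) (hcard : A.ncard = 8)
    (hiso : Nonempty (G.induce A ≃g (SimpleGraph.cycleGraph 8)ᶜ))
    (W : Set V) (hW : Nonempty (G.induce W ≃g SimpleGraph.cycleGraph 8)) :
    (W ∩ A).ncard ≤ 1 := by
  classical
  by_contra hc
  push_neg at hc
  obtain ⟨e⟩ := hW
  obtain ⟨g⟩ := hiso
  have hWfinite : W.Finite := by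
    rw [← Set.finite_coe_iff]
    exact Finite.of_equiv (Fin 8) e.toEquiv.symm
  have hAfinite : A.Finite := by
    rw [← Set.finite_coe_iff]
    exact Finite.of_equiv (Fin 8) g.toEquiv.symm
  -- two distinct elements of W ∩ A
  obtain ⟨x, y, hx, hy, hxy⟩ := Set.one_lt_ncard_iff (hWfinite.inter_of_left A) |>.mp hc
  set S : Finset (Fin 8) := Finset.univ.filter (fun i => ((e.symm i : W) : V) ∈ A) with hSdef
  have hmemS : ∀ i : Fin 8, i ∈ S ↔ ((e.symm i : W) : V) ∈ A := by
    intro i; simp [hSdef]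
  have hxS : e ⟨x, hx.1⟩ ∈ S := by
    rw [hmemS]; simpa using hx.2
  have hyS : e ⟨y, hy.1⟩ ∈ S := by
    rw [hmemS]; simpa using hy.2
  have hxyne : e ⟨x, hx.1⟩ ≠ e ⟨y, hy.1⟩ := by
    intro h
    apply hxy
    have := e.toEquiv.injective h
    exact Subtype.mk_eq_mk.mp this
  have hS2 : 2 ≤ S.card := Finset.one_lt_card_iff.mpr ⟨_, _, hxS, hyS, hxyne⟩
  by_cases hSuniv : S = Finset.univ
  · -- W ⊆ A, so W = A, and we get an iso cycleGraph 8 ≃g (cycleGraph 8)ᶜ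
    have hWA : W ⊆ A := by
      intro w hw
      have : e ⟨w, hw⟩ ∈ S := hSuniv ▸ Finset.mem_univ _
      rw [hmemS] at this
      simpa using this
    have hWcard : W.ncard = 8 := by
      have : Nat.card W = Nat.card (Fin 8) := Nat.card_congr e.toEquiv
      simpa [Nat.card_coe_set_eq] using this
    have hWeq : W = A := Set.eq_of_subset_of_ncard_le hWA (by omega) hAfinite
    subst hWeq
    let f : SimpleGraph.cycleGraph 8 ≃g (SimpleGraph.cycleGraph 8)ᶜ := e.symm.trans g
    have hne : ∀ u v : Fin 8, u ≠ v → f u ≠ f v := fun u v h hf =>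
      h (f.toEquiv.injective hf)
    have hadj : ∀ u v : Fin 8, u ≠ v → ¬(SimpleGraph.cycleGraph 8).Adj u v →
        (SimpleGraph.cycleGraph 8).Adj (f u) (f v) := by
      intro u v huv hnadj
      have h1 : ¬((SimpleGraph.cycleGraph 8)ᶜ).Adj (f u) (f v) := by
        rw [f.map_adj_iff]; exact hnadj
      rw [SimpleGraph.compl_adj] at h1
      push_neg at h1
      exact h1 (hne u v huv)
    have h02 : (SimpleGraph.cycleGraph 8).Adj (f 0) (f 2) :=
      hadj 0 2 (by decide) (by decide)
    have h24 : (SimpleGraph.cycleGraph 8).Adj (f 2) (f 4) :=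
      hadj 2 4 (by decide) (by decide)
    have h04 : (SimpleGraph.cycleGraph 8).Adj (f 0) (f 4) :=
      hadj 0 4 (by decide) (by decide)
    exact L2 (f 0) (f 2) (f 4) ⟨h02, h24, h04⟩
  · obtain ⟨i, hiS, j, hjS, k, hkS, hij, hik⟩ := L1 S hS2 hSuniv
    set w : V := ((e.symm i : W) : V) with hw
    set a : V := ((e.symm j : W) : V) with ha
    set b : V := ((e.symm k : W) : V) with hb
    have hwA : w ∉ A := fun h => hiS ((hmemS i).mpr h)
    have haA : a ∈ A := (hmemS j).mp hjS
    have hbA : b ∈ A := (hmemS k).mp hkS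
    have hGwa : G.Adj w a := by
      have : (G.induce W).Adj (e.symm i) (e.symm j) := e.symm.map_adj_iff.mpr hij
      exact this
    have hGwb : ¬G.Adj w b := by
      intro h
      have : (G.induce W).Adj (e.symm i) (e.symm k) := h
      exact hik (e.symm.map_adj_iff.mp this)
    rcases hA w hwA with h | h
    · exact hGwb (h b hbA)
    · exact h a haA hGwa
end
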